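/- arXiv:2210.04278 — 3 statements merged into one kernel-verified Lean document; each statement's English description precedes it below -/
import Mathlib

section
/- Let $p$ be a prime, $t_1,\dots,t_r$ integers with $p \nmid t_j - t_{j'}$ for all $j \neq j'$, and $k \geq 1$. Let $R = \mathbb{Z}/p^k\mathbb{Z}$, $V = R^n$ with standard basis $e_1,\dots,e_n$, and let $H_1,\dots,H_r$ be finite abelian $p$-groups with $p^k H_j = 0$. Suppose $v_1,\dots,v_n \in V$ and $F_j \colon V \to H_j$ are surjective $R$-module homomorphisms satisfying $F_j v_i = -t_j F_j e_i$ for all $1 \leq i \leq n$ and $1 \leq j \leq r$. Then the map $F \colon V \to H_1 \times \cdots \times H_r$ given by $F(v) = (F_1 v, \dots, F_r v)$ is surjective. -/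
/-!
Let `S` be the endomorphism `e_i ↦ v_i` of `V`, so that `F_j ∘ S = -t_j • F_j`; then
`F_j ∘ q(S) = q(-t_j) • F_j` for every polynomial `q`. Since the `-t_j` pairwise differ by
units of `ℤ/p^k`, the Lagrange polynomial `P_j = ∏_{j' ≠ j} (X + t_{j'})` evaluates to a unit at
`-t_j` and to zero at every other `-t_{j'}`. Hence `P_j(S)` applied to a preimage under `F_j`
reaches any element of `H_j` while being killed by the other `F_{j'}`, and summing over `j`
hits every point of the product.
-/

open Polynomial

section Interpolation

variable {R M : Type*} [CommRing R] [AddCommGroup M] [Module R M]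

theorem LinearMap.comp_aeval_of_comp_eq_smul {N : Type*} [AddCommGroup N] [Module R N]
    (F : M →ₗ[R] N) (S : Module.End R M) (c : R) (hS : F ∘ₗ S = c • F) (q : R[X]) :
    F ∘ₗ aeval S q = q.eval c • F := by
  induction q using Polynomial.induction_on with
  | C a => ext x; simp
  | add q₁ q₂ h₁ h₂ => rw [map_add, LinearMap.comp_add, h₁, h₂, eval_add, add_smul]
  | monomial m a ih =>
    rw [pow_succ, ← mul_assoc, map_mul, aeval_X, Module.End.mul_eq_comp, ← LinearMap.comp_assoc,
      ih, LinearMap.smul_comp, hS, smul_smul, eval_mul_X]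

variable {ι : Type*} [Fintype ι] [DecidableEq ι] {N : ι → Type*} [∀ j, AddCommGroup (N j)]
  [∀ j, Module R (N j)]

theorem exists_apply_eq_and_apply_eq_zero_of_comp_eq_smul (S : Module.End R M)
    (F : ∀ j, M →ₗ[R] N j) (hF : ∀ j, Function.Surjective (F j)) (c : ι → R)
    (hS : ∀ j, F j ∘ₗ S = c j • F j) (hc : Pairwise fun j j' => IsUnit (c j - c j'))
    (j : ι) (z : N j) : ∃ x, F j x = z ∧ ∀ j' ≠ j, F j' x = 0 := by
  set P : R[X] := ∏ j' ∈ Finset.univ.erase j, (X - C (c j'))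
  have hP_apply (j' : ι) (x : M) : F j' (aeval S P x) = P.eval (c j') • F j' x :=
    LinearMap.congr_fun (LinearMap.comp_aeval_of_comp_eq_smul (F j') S (c j') (hS j') P) x
  have hP_unit : IsUnit (P.eval (c j)) := by
    simp only [P, eval_prod, eval_sub, eval_X, eval_C]
    exact IsUnit.prod_iff.mpr fun j' hj' => hc (Finset.ne_of_mem_erase hj').symm
  have hP_root (j' : ι) (hj' : j' ≠ j) : P.eval (c j') = 0 := by
    simp only [P, eval_prod, eval_sub, eval_X, eval_C]
    exact Finset.prod_eq_zero (Finset.mem_erase.mpr ⟨hj', Finset.mem_univ j'⟩) (sub_self _)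
  obtain ⟨w, hw⟩ := hF j (hP_unit.unit⁻¹ • z)
  refine ⟨aeval S P w, ?_, fun j' hj' => ?_⟩
  · rw [hP_apply, hw]
    exact smul_inv_smul hP_unit.unit z
  · rw [hP_apply, hP_root j' hj', zero_smul]

theorem LinearMap.pi_surjective_of_comp_eq_smul (S : Module.End R M)
    (F : ∀ j, M →ₗ[R] N j) (hF : ∀ j, Function.Surjective (F j)) (c : ι → R)
    (hS : ∀ j, F j ∘ₗ S = c j • F j) (hc : Pairwise fun j j' => IsUnit (c j - c j')) :
    Function.Surjective (LinearMap.pi F) := by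
  rw [← LinearMap.range_eq_top, eq_top_iff]
  intro y _
  rw [← Finset.univ_sum_single y]
  refine Submodule.sum_mem _ fun j _ => ?_
  obtain ⟨x, hx, hx_zero⟩ :=
    exists_apply_eq_and_apply_eq_zero_of_comp_eq_smul S F hF c hS hc j (y j)
  refine ⟨x, funext fun j' => ?_⟩
  rcases eq_or_ne j' j with rfl | hj'
  · simp [hx]
  · simp [hx_zero j' hj', hj']

end Interpolation

theorem ZMod.isUnit_intCast_of_not_dvd {p : ℕ} (hp : p.Prime) (k : ℕ) {a : ℤ}
    (ha : ¬ (p : ℤ) ∣ a) : IsUnit (a : ZMod (p ^ k)) := by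
  rw [ZMod.coe_int_isUnit_iff_isCoprime, Nat.cast_pow]
  exact ((Nat.prime_iff_prime_int.mp hp).coprime_iff_not_dvd.mpr ha).pow_left

theorem stmt0_general (p : ℕ) (hp : p.Prime) (r n k : ℕ)
    (t : Fin r → ℤ) (ht : ∀ j j' : Fin r, j ≠ j' → ¬ ((p : ℤ) ∣ (t j - t j')))
    (H : Fin r → Type) [∀ j, AddCommGroup (H j)] [∀ j, Module (ZMod (p ^ k)) (H j)]
    (F : ∀ j, (Fin n → ZMod (p ^ k)) →ₗ[ZMod (p ^ k)] H j)
    (hF : ∀ j, Function.Surjective (F j))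
    (v : Fin n → (Fin n → ZMod (p ^ k)))
    (hv : ∀ (i : Fin n) (j : Fin r),
      F j (v i) = -(((t j : ZMod (p ^ k))) • F j (Pi.single i 1))) :
    Function.Surjective (fun x : Fin n → ZMod (p ^ k) => fun j : Fin r => F j x) := by
  let e := Pi.basisFun (ZMod (p ^ k)) (Fin n)
  have hS (j : Fin r) : F j ∘ₗ e.constr (ZMod (p ^ k)) v = (-(t j : ZMod (p ^ k))) • F j :=
    e.ext fun i => by simp [e, hv]
  have hc : Pairwise fun j j' : Fin r => IsUnit (-(t j : ZMod (p ^ k)) - -(t j' : ZMod (p ^ k))) :=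
    fun j j' hjj' => by
      simpa [neg_add_eq_sub] using ZMod.isUnit_intCast_of_not_dvd hp k (ht j' j (Ne.symm hjj'))
  exact LinearMap.pi_surjective_of_comp_eq_smul _ F hF _ hS hc

/-- If `F_j v_i = -t_j F_j e_i` for surjections `F_j` onto finite abelian `p`-groups
killed by `p^k`, and the `t_j` are pairwise incongruent mod `p`, then the combined
map into the product is surjective. -/
theorem stmt0 (p : ℕ) (hp : p.Prime) (r n k : ℕ) (hk : 1 ≤ k)
    (t : Fin r → ℤ) (ht : ∀ j j' : Fin r, j ≠ j' → ¬ ((p : ℤ) ∣ (t j - t j')))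
    (H : Fin r → Type) [∀ j, AddCommGroup (H j)] [∀ j, Module (ZMod (p ^ k)) (H j)]
    [∀ j, Fintype (H j)]
    (F : ∀ j, (Fin n → ZMod (p ^ k)) →ₗ[ZMod (p ^ k)] H j)
    (hF : ∀ j, Function.Surjective (F j))
    (v : Fin n → (Fin n → ZMod (p ^ k)))
    (hv : ∀ (i : Fin n) (j : Fin r),
      F j (v i) = -(((t j : ZMod (p ^ k))) • F j (Pi.single i 1))) :
    Function.Surjective (fun x : Fin n → ZMod (p ^ k) => fun j : Fin r => F j x) :=
  stmt0_general p hp r n k t ht H F hF v hv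
end

section
/- Let $F$ be a group generated by a finite subset of size $n$, let $H_1$ be a finite group of rank $r$ (i.e., $H_1$ is generated by $r$ elements), let $H_2$ be a finite group, and let $G_2$ be a subgroup of $H_2$. For a fixed surjective homomorphism $\phi_1 \colon F \to H_1$, the number of surjective homomorphisms $\phi_2 \colon F \to H_2$ with $\phi_2(\ker \phi_1) \leq G_2$ is at most $|G_2|^n |H_2|^r$. Consequently, the number of pairs $(\phi_1, \phi_2)$ of surjections $\phi_1 \colon F \to H_1$, $\phi_2 \colon F \to H_2$ with $\phi_2(\ker \phi_1) \leq G_2$ is at most $|H_1|^n |G_2|^n |H_2|^r$. -/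
/-- Counting surjections from an `n`-generated group: if `H1` has rank `r`, `H2` is
finite and `G2 ≤ H2`, then for a fixed surjection `φ1 : F → H1` the number of
surjections `φ2 : F → H2` with `φ2(ker φ1) ≤ G2` is at most `|G2|^n |H2|^r`, and the
number of such pairs `(φ1, φ2)` is at most `|H1|^n |G2|^n |H2|^r`. -/
theorem stmt5 (F H1 H2 : Type*) [Group F] [Group H1] [Group H2] [Finite H1] [Finite H2]
    (n r : ℕ) (S : Finset F) (hS : Subgroup.closure (S : Set F) = ⊤) (hSn : S.card = n)
    (T : Finset H1) (hT : Subgroup.closure (T : Set H1) = ⊤) (hTr : T.card = r)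
    (G2 : Subgroup H2) :
    (∀ φ1 : F →* H1, Function.Surjective φ1 →
      Nat.card {φ2 : F →* H2 // Function.Surjective φ2 ∧ φ1.ker.map φ2 ≤ G2} ≤
        Nat.card G2 ^ n * Nat.card H2 ^ r) ∧
    Nat.card {φ : (F →* H1) × (F →* H2) //
        Function.Surjective φ.1 ∧ Function.Surjective φ.2 ∧ φ.1.ker.map φ.2 ≤ G2} ≤
      Nat.card H1 ^ n * Nat.card G2 ^ n * Nat.card H2 ^ r := by
  classical
  -- Choice of preimages `y` of the generators of `H1`, and elements `z s` in the
  -- subgroup generated by the `y`'s with the same image as `s`.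
  have exYZ : ∀ ψ : F →* H1, Function.Surjective ψ →
      ∃ (y : T → F) (z : S → F), (∀ t : T, ψ (y t) = t) ∧
        (∀ s : S, z s ∈ Subgroup.closure (Set.range y)) ∧ (∀ s : S, ψ (z s) = ψ s) := by
    intro ψ hψ
    choose y hy using fun t : T => hψ t
    have hmap : (Subgroup.closure (Set.range y)).map ψ = ⊤ := by
      rw [MonoidHom.map_closure]
      have himg : ψ '' Set.range y = (T : Set H1) := by
        rw [← Set.range_comp]
        ext h
        constructor
        · rintro ⟨t, rfl⟩; simpa [hy t] using t.2
        · intro hh; exact ⟨⟨h, hh⟩, hy _⟩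
      rw [himg, hT]
    have hz : ∀ s : S, ∃ w ∈ Subgroup.closure (Set.range y), ψ w = ψ (s : F) := by
      intro s
      have : ψ (s : F) ∈ (Subgroup.closure (Set.range y)).map ψ := by
        rw [hmap]; trivial
      obtain ⟨w, hw1, hw2⟩ := this
      exact ⟨w, hw1, hw2⟩
    choose z hz1 hz2 using hz
    exact ⟨y, z, hy, hz1, hz2⟩
  choose! y z hy hz1 hz2 using exYZ
  -- The commutator-style elements `s * (z s)⁻¹` lie in the kernel of `φ1`.
  have hker : ∀ (φ1 : F →* H1), Function.Surjective φ1 → ∀ s : S,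
      (s : F) * (z φ1 s)⁻¹ ∈ φ1.ker := by
    intro φ1 hφ1 s
    simp [MonoidHom.mem_ker, hz2 φ1 hφ1 s]
  -- A homomorphism `φ2` is determined by its values on the kernel elements and the `y`'s.
  have inj2 : ∀ (φ1 : F →* H1), Function.Surjective φ1 → ∀ (a b : F →* H2),
      (∀ s : S, a ((s : F) * (z φ1 s)⁻¹) = b ((s : F) * (z φ1 s)⁻¹)) →
      (∀ t : T, a (y φ1 t) = b (y φ1 t)) → a = b := by
    intro φ1 hφ1 a b h1 h2
    have hcl : Set.EqOn a b (Subgroup.closure (Set.range (y φ1))) :=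
      MonoidHom.eqOn_closure (by rintro x ⟨t, rfl⟩; exact h2 t)
    apply MonoidHom.eq_of_eqOn_dense hS
    intro s hs
    have hzs := hz1 φ1 hφ1 ⟨s, hs⟩
    have hdec : s = (((⟨s, hs⟩ : S) : F) * (z φ1 ⟨s, hs⟩)⁻¹) * z φ1 ⟨s, hs⟩ := by group
    calc a s = a (((⟨s, hs⟩ : S) : F) * (z φ1 ⟨s, hs⟩)⁻¹) * a (z φ1 ⟨s, hs⟩) := by
            rw [← map_mul]; exact congrArg a hdec
      _ = b (((⟨s, hs⟩ : S) : F) * (z φ1 ⟨s, hs⟩)⁻¹) * b (z φ1 ⟨s, hs⟩) := by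
            rw [h1 ⟨s, hs⟩, hcl hzs]
      _ = b s := by rw [← map_mul]; exact (congrArg b hdec).symm
  -- membership of the kernel values in G2
  have hmem : ∀ (φ1 : F →* H1), Function.Surjective φ1 → ∀ (φ2 : F →* H2),
      φ1.ker.map φ2 ≤ G2 → ∀ s : S, φ2 ((s : F) * (z φ1 s)⁻¹) ∈ G2 := by
    intro φ1 hφ1 φ2 hle s
    exact hle ⟨_, hker φ1 hφ1 s, rfl⟩
  have hcard : Nat.card ((S → G2) × (T → H2)) = Nat.card G2 ^ n * Nat.card H2 ^ r := by
    rw [Nat.card_prod, Nat.card_fun, Nat.card_fun, Nat.card_eq_finsetCard,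
      Nat.card_eq_finsetCard, hSn, hTr]
  constructor
  · intro φ1 hφ1
    rw [← hcard]
    apply Nat.card_le_card_of_injective
      (f := fun φ2 : {φ2 : F →* H2 // Function.Surjective φ2 ∧ φ1.ker.map φ2 ≤ G2} =>
        ((fun s : S => (⟨φ2.1 ((s : F) * (z φ1 s)⁻¹), hmem φ1 hφ1 φ2.1 φ2.2.2 s⟩ : G2),
          fun t : T => φ2.1 (y φ1 t)) : (S → G2) × (T → H2)))
    intro a b hab
    apply Subtype.ext
    apply inj2 φ1 hφ1
    · intro s
      exact congrArg Subtype.val (congrFun (congrArg Prod.fst hab) s)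
    · intro t
      exact congrFun (congrArg Prod.snd hab) t
  · have hcard2 : Nat.card ((S → H1) × ((S → G2) × (T → H2))) =
        Nat.card H1 ^ n * Nat.card G2 ^ n * Nat.card H2 ^ r := by
      rw [Nat.card_prod, hcard, Nat.card_fun, Nat.card_eq_finsetCard, hSn, mul_assoc]
    rw [← hcard2]
    apply Nat.card_le_card_of_injective
      (f := fun φ : {φ : (F →* H1) × (F →* H2) //
          Function.Surjective φ.1 ∧ Function.Surjective φ.2 ∧ φ.1.ker.map φ.2 ≤ G2} =>
        ((fun s : S => φ.1.1 s,
          (fun s : S => (⟨φ.1.2 ((s : F) * (z φ.1.1 s)⁻¹),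
              hmem φ.1.1 φ.2.1 φ.1.2 φ.2.2.2 s⟩ : G2),
           fun t : T => φ.1.2 (y φ.1.1 t))) : (S → H1) × ((S → G2) × (T → H2))))
    intro a b hab
    have h1 : a.1.1 = b.1.1 := by
      apply MonoidHom.eq_of_eqOn_dense hS
      intro s hs
      exact congrFun (congrArg Prod.fst hab) ⟨s, hs⟩
    have h2 : a.1.2 = b.1.2 := by
      apply inj2 a.1.1 a.2.1
      · intro s
        have := congrArg Subtype.val (congrFun (congrArg Prod.fst (congrArg Prod.snd hab)) s)
        simpa [← h1] using this
      · intro t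
        have := congrFun (congrArg Prod.snd (congrArg Prod.snd hab)) t
        simpa [← h1] using this
    apply Subtype.ext
    exact Prod.ext h1 h2
end

section
/- Let $H$ be a finite abelian $p$-group of type $\nu$ with $\ell(\nu) = r$ parts (all parts at least $1$), let $k \geq 1$ with $p^k H = 0$, set $R = \mathbb{Z}/p^k\mathbb{Z}$ and $V = R^n$ with $n \geq r$. Let $F_1 \colon V \to H$ be a surjective $R$-module homomorphism. Then there exists a basis $\{z_1, \dots, z_n\}$ of the free $R$-module $V$ such that $\ker F_1$ is generated by $p^{\nu_1} z_1, \dots, p^{\nu_r} z_r, z_{r+1}, \dots, z_n$. -/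
/-!
Let `g j ∈ H` correspond to the generator of the `j`-th cyclic factor, so that
`∑ c j • g j = 0` exactly when `p ^ ν j ∣ c j` for all `j`. It suffices to find a basis `z` of `V`
with `F₁ z_j = g_j` for `j < r` and `F₁ z_j = 0` otherwise, since the kernel can then be read off
coordinatewise. Such a basis is built by induction on `r` over the local ring `ℤ/p^k`: since
`g 0 ∉ pH`, a preimage `x` of `g 0` is not in `pV`, so one of its coordinates is a unit and `x`
together with the remaining coordinate vectors spans `V`. The induction hypothesis, applied to the
induced surjection from those coordinates onto `H ⧸ ⟨g 0⟩`, gives the other basis vectors up to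
multiples of `x`, which are then subtracted off.
-/

section

open Function Submodule IsLocalRing

variable {R : Type*} [CommRing R] {H : Type*} [AddCommGroup H] [Module R H]

structure IsDiagonalPresentation {ι : Type*} [Fintype ι] (g : ι → H) (d : ι → R) : Prop where
  span_eq : span R (Set.range g) = ⊤
  sum_smul_eq_zero_iff : ∀ c : ι → R, ∑ i, c i • g i = 0 ↔ ∀ i, d i ∣ c i

namespace IsDiagonalPresentation

theorem notMem_maximalIdeal_smul_top [IsLocalRing R] {ι : Type*} [Fintype ι] [DecidableEq ι]
    {g : ι → H} {d : ι → R} (hg : IsDiagonalPresentation g d) {i : ι}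
    (hd : d i ∈ maximalIdeal R) : g i ∉ maximalIdeal R • (⊤ : Submodule R H) := by
  rw [← hg.span_eq, mem_ideal_smul_span_iff_exists_sum]
  rintro ⟨a, ha, hsum⟩
  rw [Finsupp.sum_fintype _ _ (by simp)] at hsum
  have hrel : ∑ j, (a j - Pi.single (M := fun _ => R) i 1 j) • g j = 0 := by
    simp [sub_smul, Finset.sum_sub_distrib, hsum, Pi.single_apply]
  have hdvd := (hg.sum_smul_eq_zero_iff _).1 hrel i
  rw [Pi.single_eq_same] at hdvd
  have h1 : a i - 1 ∈ maximalIdeal R := Ideal.mem_of_dvd _ hdvd hd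
  exact (maximalIdeal.isMaximal R).ne_top
    ((Ideal.eq_top_iff_one _).2 (by simpa using Ideal.sub_mem _ (ha i) h1))

theorem quotient_tail {r : ℕ} {g : Fin (r + 1) → H} {d : Fin (r + 1) → R}
    (hg : IsDiagonalPresentation g d) :
    IsDiagonalPresentation (fun j : Fin r => (R ∙ g 0).mkQ (g j.succ)) (fun j => d j.succ) where
  span_eq := by
    refine eq_top_iff.2 fun q _ => ?_
    obtain ⟨h, rfl⟩ := (R ∙ g 0).mkQ_surjective q
    obtain ⟨c, rfl⟩ := (mem_span_range_iff_exists_fun R).1 (hg.span_eq ▸ mem_top (x := h))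
    rw [Fin.sum_univ_succ, map_add, map_smul, mkQ_apply,
      (Quotient.mk_eq_zero _).2 (mem_span_singleton_self _), smul_zero, zero_add, map_sum]
    exact sum_mem fun j _ => by
      rw [map_smul]; exact smul_mem _ _ (subset_span ⟨j, rfl⟩)
  sum_smul_eq_zero_iff c := by
    have hmk : ∑ j, c j • (R ∙ g 0).mkQ (g j.succ) = (R ∙ g 0).mkQ (∑ j, c j • g j.succ) := by
      simp [map_sum]
    rw [hmk, mkQ_apply, Quotient.mk_eq_zero, mem_span_singleton]
    constructor
    · rintro ⟨a, ha⟩ j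
      have hrel : ∑ i, (Fin.cons (-a) c : Fin (r + 1) → R) i • g i = 0 := by
        rw [Fin.sum_univ_succ]
        simp [ha]
      simpa using (hg.sum_smul_eq_zero_iff _).1 hrel j.succ
    · intro hc
      refine ⟨0, ?_⟩
      have := (hg.sum_smul_eq_zero_iff (Fin.cons 0 c)).2 (Fin.cases (dvd_zero _) hc)
      rw [Fin.sum_univ_succ] at this
      simpa [eq_comm] using this

theorem sum_smul_dite_eq_zero_iff {r n : ℕ} {g : Fin r → H}
    {d : Fin r → R} (hg : IsDiagonalPresentation g d) (hrn : r ≤ n) (c : Fin n → R) :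
    ∑ i : Fin n, c i • (if h : (i : ℕ) < r then g ⟨i, h⟩ else 0) = 0 ↔
      ∀ i : Fin n, (if h : (i : ℕ) < r then d ⟨i, h⟩ else 1) ∣ c i := by
  have hsum : ∑ i : Fin n, c i • (if h : (i : ℕ) < r then g ⟨i, h⟩ else 0)
      = ∑ j : Fin r, c (Fin.castLE hrn j) • g j := by
    refine (Fintype.sum_of_injective (Fin.castLE hrn) (Fin.castLE_injective hrn) _ _
      (fun i hi => ?_) (fun j => by simp)).symm
    rw [dif_neg fun h => hi ⟨⟨i, h⟩, rfl⟩, smul_zero]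
  rw [hsum, hg.sum_smul_eq_zero_iff]
  constructor
  · intro hc i
    split_ifs with h
    · exact hc ⟨i, h⟩
    · exact one_dvd _
  · intro hc j
    simpa using hc (Fin.castLE hrn j)

end IsDiagonalPresentation

theorem exists_isUnit_of_notMem_maximalIdeal_smul_top [IsLocalRing R] {ι : Type*} [Fintype ι]
    [DecidableEq ι] {x : ι → R} (hx : x ∉ maximalIdeal R • (⊤ : Submodule R (ι → R))) :
    ∃ i, IsUnit (x i) := by
  by_contra! h
  refine hx ?_
  rw [← Finset.univ_sum_single x]
  exact sum_mem fun i _ => by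
    rw [← mul_one (x i), ← smul_eq_mul, Pi.single_smul]
    exact smul_mem_smul ((mem_maximalIdeal _).2 (h i)) mem_top

theorem exists_linearMap_smul_add_eq {m : ℕ} {x : Fin (m + 1) → R} {i : Fin (m + 1)}
    (hx : IsUnit (x i)) :
    ∃ ι : (Fin m → R) →ₗ[R] Fin (m + 1) → R, ∀ y, ∃ (c : R) (w : Fin m → R), c • x + ι w = y := by
  refine ⟨{ toFun := fun w => i.insertNth 0 w,
             map_add' := fun v w => by ext j; induction j using i.succAboveCases <;> simp,
             map_smul' := fun a w => by ext j; induction j using i.succAboveCases <;> simp }, ?_⟩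
  intro y
  refine ⟨hx.unit⁻¹ * y i, i.removeNth (y - (hx.unit⁻¹ * y i) • x), ?_⟩
  simp only [LinearMap.coe_mk, AddHom.coe_mk]
  have h0 : (y - (hx.unit⁻¹ * y i) • x) i = 0 := by
    rw [Pi.sub_apply, Pi.smul_apply, smul_eq_mul, mul_right_comm, IsUnit.val_inv_mul, one_mul,
      sub_self]
  rw [← h0, Fin.insertNth_self_removeNth, add_sub_cancel]

theorem exists_basis_cons_sub_smul [Nontrivial R] {m : ℕ} {x : Fin (m + 1) → R}
    {ι : (Fin m → R) →ₗ[R] Fin (m + 1) → R} (hι : ∀ y, ∃ (c : R) (w : Fin m → R), c • x + ι w = y)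
    (z : Module.Basis (Fin m) R (Fin m → R)) (t : Fin m → R) :
    ∃ b : Module.Basis (Fin (m + 1)) R (Fin (m + 1) → R),
      b 0 = x ∧ ∀ j, b j.succ = ι (z j) - t j • x := by
  let v : Fin (m + 1) → Fin (m + 1) → R := Fin.cons x fun j => ι (z j) - t j • x
  have hx : x ∈ span R (Set.range v) := subset_span ⟨0, rfl⟩
  have hιz : ∀ j, ι (z j) ∈ span R (Set.range v) := fun j => by
    rw [← sub_add_cancel (ι (z j)) (t j • x)]
    exact add_mem (subset_span ⟨j.succ, rfl⟩) (smul_mem _ _ hx)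
  have hspan : ⊤ ≤ span R (Set.range v) := by
    rintro y -
    obtain ⟨c, w, rfl⟩ := hι y
    rw [← z.sum_repr w, map_sum]
    exact add_mem (smul_mem _ _ hx) <| sum_mem fun j _ => by
      rw [map_smul]; exact smul_mem _ _ (hιz j)
  exact ⟨basisOfTopLeSpanOfCardEqFinrank v hspan (by simp), by simp [v], fun j => by simp [v]⟩

theorem Module.Basis.ker_eq_span_smul {M ι : Type*} [AddCommGroup M] [Module R M] [Fintype ι]
    (b : Module.Basis ι R M) (F : M →ₗ[R] H) (d : ι → R)
    (h : ∀ c : ι → R, ∑ i, c i • F (b i) = 0 ↔ ∀ i, d i ∣ c i) :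
    LinearMap.ker F = span R (Set.range fun i => d i • b i) := by
  classical
  apply le_antisymm
  · intro x hx
    have hF : ∑ i, b.repr x i • F (b i) = 0 := by
      have := LinearMap.mem_ker.1 hx
      rw [← b.sum_repr x, map_sum] at this
      simpa only [map_smul] using this
    choose a ha using (h _).1 hF
    rw [← b.sum_repr x]
    exact sum_mem fun i _ => by
      rw [ha i, mul_comm, mul_smul]; exact smul_mem _ _ (subset_span ⟨i, rfl⟩)
  · rw [span_le]
    rintro _ ⟨i, rfl⟩
    have := (h (Pi.single i (d i))).2 fun j => by
      rw [Pi.single_apply]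
      split_ifs with hj
      · exact hj ▸ dvd_rfl
      · exact dvd_zero _
    simpa [Pi.single_apply] using this

theorem IsDiagonalPresentation.exists_basis_apply_eq [IsLocalRing R] {r n : ℕ} {g : Fin r → H}
    {d : Fin r → R} (hg : IsDiagonalPresentation g d) (hd : ∀ j, d j ∈ maximalIdeal R)
    (F : (Fin n → R) →ₗ[R] H) (hF : Surjective F) (hrn : r ≤ n) :
    ∃ b : Module.Basis (Fin n) R (Fin n → R),
      ∀ i, F (b i) = if h : (i : ℕ) < r then g ⟨i, h⟩ else 0 := by
  induction r generalizing n H with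
  | zero =>
    refine ⟨Pi.basisFun R (Fin n), fun i => ?_⟩
    have hH : (⊤ : Submodule R H) = ⊥ := by simp [← hg.span_eq]
    simpa using (hH ▸ mem_top : F (Pi.basisFun R (Fin n) i) ∈ (⊥ : Submodule R H))
  | succ r ih =>
    obtain ⟨m, rfl⟩ : ∃ m, n = m + 1 := ⟨n - 1, by omega⟩
    obtain ⟨x, hx⟩ := hF (g 0)
    have hxm : x ∉ maximalIdeal R • (⊤ : Submodule R (Fin (m + 1) → R)) := fun hmem =>
      hg.notMem_maximalIdeal_smul_top (hd 0) (hx ▸ smul_top_le_comap_smul_top _ F hmem)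
    obtain ⟨i, hi⟩ := exists_isUnit_of_notMem_maximalIdeal_smul_top hxm
    obtain ⟨ι, hι⟩ := exists_linearMap_smul_add_eq hi
    let F' := (R ∙ g 0).mkQ ∘ₗ F ∘ₗ ι
    have hF' : Surjective F' := by
      intro q
      obtain ⟨h, rfl⟩ := (R ∙ g 0).mkQ_surjective q
      obtain ⟨y, rfl⟩ := hF h
      obtain ⟨c, w, rfl⟩ := hι y
      refine ⟨w, ?_⟩
      simp [F', hx, (Quotient.mk_eq_zero _).2 (mem_span_singleton_self _)]
    obtain ⟨z, hz⟩ := ih hg.quotient_tail (fun j => hd j.succ) F' hF' (by omega)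
    have ht : ∀ j : Fin m, ∃ t : R,
        F (ι (z j)) - t • g 0 = if h : (j.succ : ℕ) < r + 1 then g ⟨j.succ, h⟩ else 0 := by
      intro j
      have hq : (R ∙ g 0).mkQ (F (ι (z j)))
          = (R ∙ g 0).mkQ (if h : (j.succ : ℕ) < r + 1 then g ⟨j.succ, h⟩ else 0) := by
        by_cases h : (j : ℕ) < r <;> simpa [F', h] using hz j
      obtain ⟨t, ht⟩ := mem_span_singleton.1 ((Submodule.Quotient.eq _).1 hq)
      exact ⟨t, by rw [ht, sub_sub_cancel]⟩
    choose t ht using ht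
    obtain ⟨b, hb0, hbsucc⟩ := exists_basis_cons_sub_smul hι z t
    refine ⟨b, Fin.cases ?_ fun j => ?_⟩
    · simp [hb0, hx]
    · rw [hbsucc, map_sub, map_smul, hx, ht]

end

theorem ZMod.castHom_eq_zero_iff {m n : ℕ} [NeZero n] (h : m ∣ n) (c : ZMod n) :
    ZMod.castHom h (ZMod m) c = 0 ↔ (m : ZMod n) ∣ c := by
  constructor
  · intro h0
    rw [← ZMod.natCast_zmod_val c, map_natCast, ZMod.natCast_eq_zero_iff] at h0
    obtain ⟨s, hs⟩ := h0
    exact ⟨s, by rw [← ZMod.natCast_zmod_val c, hs, Nat.cast_mul]⟩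
  · rintro ⟨s, rfl⟩
    rw [map_mul, map_natCast, ZMod.natCast_self, zero_mul]

theorem isDiagonalPresentation_of_addEquiv {H : Type*} [AddCommGroup H] {N : ℕ} [NeZero N]
    [Module (ZMod N) H] {ι : Type*} [Fintype ι] [DecidableEq ι] {a : ι → ℕ} (ha : ∀ i, a i ∣ N)
    (e : H ≃+ ∀ i, ZMod (a i)) :
    IsDiagonalPresentation (fun i => e.symm (Pi.single i 1)) (fun i => (a i : ZMod N)) := by
  have hsmul : ∀ (c : ZMod N) (h : H), e (c • h) = c.val • e h := fun c h => by
    conv_lhs => rw [← ZMod.natCast_zmod_val c]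
    rw [Nat.cast_smul_eq_nsmul, map_nsmul]
  have he : ∀ (c : ι → ZMod N), e (∑ i, c i • e.symm (Pi.single i 1)) =
      fun i => ZMod.castHom (ha i) _ (c i) := by
    intro c
    simp only [map_sum, hsmul, AddEquiv.apply_symm_apply, ← Pi.single_smul, nsmul_eq_mul, mul_one,
      Finset.univ_sum_single, ZMod.natCast_val, ZMod.castHom_apply]
  refine ⟨eq_top_iff.2 fun h _ => (Submodule.mem_span_range_iff_exists_fun _).2 ?_, fun c => ?_⟩
  · choose c hc using fun i => ZMod.ringHom_surjective (ZMod.castHom (ha i) (ZMod (a i))) (e h i)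
    exact ⟨c, e.injective (by rw [he]; exact funext hc)⟩
  · rw [← e.map_eq_zero_iff, he, funext_iff]
    exact forall_congr' fun i => ZMod.castHom_eq_zero_iff (ha i) (c i)

theorem ZMod.isLocalRing_prime_pow {p k : ℕ} [Fact p.Prime] (hk : k ≠ 0) :
    IsLocalRing (ZMod (p ^ k)) :=
  have : Fact (1 < p ^ k) := ⟨Nat.one_lt_pow hk (Fact.out : p.Prime).one_lt⟩
  IsLocalRing.of_surjective' (PadicInt.toZModPow k) (ZMod.ringHom_surjective _)

theorem stmt14_general (p : ℕ) (hp : p.Prime) (k r n : ℕ) (hk : 1 ≤ k) (hrn : r ≤ n)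
    (ν : Fin r → ℕ) (hν1 : ∀ j, 1 ≤ ν j) (hνk : ∀ j, ν j ≤ k)
    (H : Type*) [AddCommGroup H] [Module (ZMod (p ^ k)) H]
    (e : H ≃+ ∀ j : Fin r, ZMod (p ^ ν j))
    (F1 : (Fin n → ZMod (p ^ k)) →ₗ[ZMod (p ^ k)] H)
    (hF1 : Function.Surjective F1) :
    ∃ b : Module.Basis (Fin n) (ZMod (p ^ k)) (Fin n → ZMod (p ^ k)),
      LinearMap.ker F1 = Submodule.span (ZMod (p ^ k))
        (Set.range (fun i : Fin n =>
          if h : (i : ℕ) < r then ((p : ZMod (p ^ k)) ^ ν ⟨i, h⟩) • b i else b i)) := by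
  have : Fact p.Prime := ⟨hp⟩
  have : IsLocalRing (ZMod (p ^ k)) := ZMod.isLocalRing_prime_pow (by omega)
  have hg := isDiagonalPresentation_of_addEquiv (fun j => pow_dvd_pow p (hνk j)) e
  have hd (j : Fin r) : ((p ^ ν j : ℕ) : ZMod (p ^ k)) ∈ IsLocalRing.maximalIdeal _ := by
    refine (IsLocalRing.mem_maximalIdeal _).2 (IsNilpotent.not_isUnit ⟨k, ?_⟩)
    rw [← Nat.cast_pow, ← pow_mul, mul_comm, pow_mul, Nat.cast_pow, ZMod.natCast_self,
      zero_pow (Nat.one_le_iff_ne_zero.1 (hν1 j))]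
  obtain ⟨b, hb⟩ := hg.exists_basis_apply_eq hd F1 hF1 hrn
  refine ⟨b, ?_⟩
  rw [b.ker_eq_span_smul F1 _ fun c => by simpa only [hb] using hg.sum_smul_dite_eq_zero_iff hrn c]
  congr 2 with i
  split_ifs <;> simp

/-- Smith-normal-form structure of the kernel of a surjection from a free module over
`ℤ/p^k`: if `H` has type `ν` with `r` parts, there is a basis `z` of `V = R^n` such
that `ker F1` is generated by `p^{ν_1} z_1, …, p^{ν_r} z_r, z_{r+1}, …, z_n`. -/
theorem stmt14 (p : ℕ) (hp : p.Prime) (k r n : ℕ) (hk : 1 ≤ k) (hrn : r ≤ n)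
    (ν : Fin r → ℕ) (hν : Antitone ν) (hν1 : ∀ j, 1 ≤ ν j) (hνk : ∀ j, ν j ≤ k)
    (H : Type*) [AddCommGroup H] [Module (ZMod (p ^ k)) H]
    (e : H ≃+ ∀ j : Fin r, ZMod (p ^ ν j))
    (F1 : (Fin n → ZMod (p ^ k)) →ₗ[ZMod (p ^ k)] H)
    (hF1 : Function.Surjective F1) :
    ∃ b : Module.Basis (Fin n) (ZMod (p ^ k)) (Fin n → ZMod (p ^ k)),
      LinearMap.ker F1 = Submodule.span (ZMod (p ^ k))
        (Set.range (fun i : Fin n =>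
          if h : (i : ℕ) < r then ((p : ZMod (p ^ k)) ^ ν ⟨i, h⟩) • b i else b i)) :=
  stmt14_general p hp k r n hk hrn ν hν1 hνk H e F1 hF1
end
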